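/- Let G = ⟨x, y | x⁸ = e, y² = x⁴, y⁻¹xy = x⁻¹⟩ be the generalized quaternion group of order 16 and H = ⟨x²⟩. Then H is a (2,2)-regular set in Cay(G,S) with S = {x², x⁻², x, x⁻¹, y, y⁻¹, xy, (xy)⁻¹}, but H is not a total perfect code in any Cayley graph of G. -/

import Mathlib

/-!
Write x = a 1 and y = xa 0, so that H = ⟨x²⟩ = {a 0, a 2, a 4, a 6}. The subgroup H is normal
of index 4 with cosets H, Hx, Hy, Hxy, and S meets each of them in exactly two elements; since a
vertex v has as many neighbours in H as S has elements in Hv⁻¹, this is the (2,2)-regularity.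

For the second claim, y² = x⁴ ∈ H while every yh with h ∈ H has order 4. For an inverse-closed
S the map w ↦ y w⁻¹ y then permutes the neighbours of y inside H without fixed points, so y
cannot have exactly one neighbour in H.
-/

/-- The Cayley graph of a group `G` with connection set `S`:
`x` is adjacent to `y` iff `y * x⁻¹ ∈ S` (symmetrized; for inverse-closed `S`
not containing `1` this is the usual Cayley graph). -/
def cayley {G : Type*} [Group G] (S : Set G) : SimpleGraph G :=
  SimpleGraph.fromRel (fun x y => y * x⁻¹ ∈ S)

/-- `C` is an `(a,b)`-regular set in `Γ`: every vertex in `C` has exactly `a`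
neighbors in `C`, and every vertex outside `C` has exactly `b` neighbors in `C`. -/
def IsRegularSet {V : Type*} (Γ : SimpleGraph V) (C : Set V) (a b : ℕ) : Prop :=
  (∀ v ∈ C, (Γ.neighborSet v ∩ C).ncard = a) ∧
  (∀ v ∉ C, (Γ.neighborSet v ∩ C).ncard = b)

open Finset

theorem Set.ncard_ne_one_of_mapsTo_of_ne {α : Type*} {T : Set α} {f : α → α}
    (hf : Set.MapsTo f T T) (hfix : ∀ x ∈ T, f x ≠ x) : T.ncard ≠ 1 := by
  intro h
  obtain ⟨x, rfl⟩ := Set.ncard_eq_one.1 h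
  exact hfix x rfl (hf rfl)

section Cayley

variable {G : Type*} [Group G] {S : Set G}

theorem cayley_adj_iff (hS : S⁻¹ = S) {x y : G} :
    (cayley S).Adj x y ↔ x ≠ y ∧ y * x⁻¹ ∈ S := by
  have : x * y⁻¹ ∈ S ↔ y * x⁻¹ ∈ S := by
    rw [← Set.inv_mem_inv, hS, mul_inv_rev, inv_inv]
  rw [cayley, SimpleGraph.fromRel_adj, this, or_self]

theorem neighborSet_cayley_inter (hS : S⁻¹ = S) (h1 : (1 : G) ∉ S) (v : G) (C : Set G) :
    (cayley S).neighborSet v ∩ C = {w ∈ C | w * v⁻¹ ∈ S} := by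
  ext w
  simp only [Set.mem_inter_iff, SimpleGraph.mem_neighborSet, cayley_adj_iff hS, Set.mem_ofPred_eq]
  refine ⟨fun ⟨⟨_, hw⟩, hC⟩ => ⟨hC, hw⟩, fun ⟨hC, hw⟩ => ⟨⟨?_, hw⟩, hC⟩⟩
  rintro rfl
  exact h1 (mul_inv_cancel v ▸ hw)

theorem ncard_neighborSet_cayley_inter [DecidableEq G] {S C : Finset G}
    (hS : (S : Set G)⁻¹ = S) (h1 : (1 : G) ∉ S) (v : G) :
    ((cayley (S : Set G)).neighborSet v ∩ C).ncard = #{w ∈ C | w * v⁻¹ ∈ S} := by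
  rw [neighborSet_cayley_inter hS (by exact_mod_cast h1), ← Set.ncard_coe_finset]
  congr 1
  ext w
  simp

theorem not_isRegularSet_cayley_one_of_sq_mem {H : Subgroup G} [H.Normal] (hS : S⁻¹ = S)
    {g : G} (hg : g ^ 2 ∈ H) (hgh : ∀ h ∈ H, (g * h) ^ 2 ≠ 1) (a : ℕ) :
    ¬ IsRegularSet (cayley S) H a 1 := by
  have hgH : g ∉ H := fun hgH => hgh g⁻¹ (inv_mem hgH) (by simp)
  refine fun hreg => Set.ncard_ne_one_of_mapsTo_of_ne (f := fun w => g * w⁻¹ * g) ?_ ?_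
    (hreg.2 g hgH)
  · rintro w ⟨hadj, hw⟩
    rw [SimpleGraph.mem_neighborSet, cayley_adj_iff hS] at hadj
    have hfw : g * w⁻¹ * g ∈ H := by
      simpa [sq, mul_assoc] using H.mul_mem (Subgroup.Normal.conj_mem ‹_› _ (inv_mem hw) g) hg
    refine ⟨(cayley_adj_iff hS).2 ⟨fun h => hgH (h ▸ hfw), ?_⟩, hfw⟩
    rw [mul_inv_cancel_right, ← hS, Set.mem_inv, mul_inv_rev, inv_inv]
    exact hadj.2
  · rintro w ⟨-, hw⟩ hfix
    exact hgh w⁻¹ (inv_mem hw) (by rw [sq]; nth_rw 2 [← hfix]; group)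

end Cayley

namespace QuaternionGroup

theorem coe_zpowers_a_one_sq :
    (Subgroup.zpowers (a 1 ^ 2 : QuaternionGroup 4) : Set (QuaternionGroup 4)) =
      ↑({a 0, a 2, a 4, a 6} : Finset (QuaternionGroup 4)) := by
  ext g
  rw [SetLike.mem_coe, ← mem_powers_iff_mem_zpowers, mem_powers_iff_mem_range_orderOf,
    orderOf_pow, orderOf_a_one, Finset.mem_coe]
  revert g
  decide

theorem mem_zpowers_a_one_sq_iff {g : QuaternionGroup 4} :
    g ∈ Subgroup.zpowers (a 1 ^ 2) ↔ g ∈ ({a 0, a 2, a 4, a 6} : Finset (QuaternionGroup 4)) := by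
  rw [← SetLike.mem_coe, coe_zpowers_a_one_sq, Finset.mem_coe]

instance : (Subgroup.zpowers (a 1 ^ 2 : QuaternionGroup 4)).Normal :=
  ⟨by simp_rw [mem_zpowers_a_one_sq_iff]; decide⟩

theorem ncard_neighborSet_cayley_inter_zpowers_a_one_sq (v : QuaternionGroup 4) :
    ((cayley ({a 1 ^ 2, (a 1 ^ 2)⁻¹, a 1, (a 1)⁻¹, xa 0, (xa 0)⁻¹,
        a 1 * xa 0, (a 1 * xa 0)⁻¹} : Set (QuaternionGroup 4))).neighborSet v ∩
      Subgroup.zpowers (a 1 ^ 2 : QuaternionGroup 4)).ncard = 2 := by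
  set S : Finset (QuaternionGroup 4) :=
    {a 1 ^ 2, (a 1 ^ 2)⁻¹, a 1, (a 1)⁻¹, xa 0, (xa 0)⁻¹, a 1 * xa 0, (a 1 * xa 0)⁻¹}
  have hS : (S : Set (QuaternionGroup 4))⁻¹ = S := by
    rw [← Finset.coe_inv, Finset.coe_inj]
    decide
  have h1 : (1 : QuaternionGroup 4) ∉ S := by decide
  have hcount : ((cayley (S : Set _)).neighborSet v ∩
      Subgroup.zpowers (a 1 ^ 2 : QuaternionGroup 4)).ncard = 2 := by
    rw [coe_zpowers_a_one_sq, ncard_neighborSet_cayley_inter hS h1]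
    revert v
    decide
  push_cast [S] at hcount
  exact hcount

end QuaternionGroup

open QuaternionGroup in
theorem stmt17 :
    IsRegularSet
      (cayley ({a 1 ^ 2, (a 1 ^ 2)⁻¹, a 1, (a 1)⁻¹, xa 0, (xa 0)⁻¹,
          a 1 * xa 0, (a 1 * xa 0)⁻¹} : Set (QuaternionGroup 4)))
      (Subgroup.zpowers ((a 1 : QuaternionGroup 4) ^ 2) : Set (QuaternionGroup 4)) 2 2 ∧
    ¬ ∃ S : Set (QuaternionGroup 4), S⁻¹ = S ∧ (1 : QuaternionGroup 4) ∉ S ∧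
      IsRegularSet (cayley S)
        (Subgroup.zpowers ((a 1 : QuaternionGroup 4) ^ 2) : Set (QuaternionGroup 4)) 1 1 := by
  refine ⟨⟨fun v _ => ncard_neighborSet_cayley_inter_zpowers_a_one_sq v,
    fun v _ => ncard_neighborSet_cayley_inter_zpowers_a_one_sq v⟩, ?_⟩
  rintro ⟨S, hS, -, hreg⟩
  have hsq : (xa 0 : QuaternionGroup 4) ^ 2 ∈ Subgroup.zpowers (a 1 ^ 2) := by
    rw [mem_zpowers_a_one_sq_iff]; decide
  have hord : ∀ h ∈ Subgroup.zpowers (a 1 ^ 2 : QuaternionGroup 4), (xa 0 * h) ^ 2 ≠ 1 := by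
    simp_rw [mem_zpowers_a_one_sq_iff]; decide
  exact not_isRegularSet_cayley_one_of_sq_mem hS hsq hord 1 hreg
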